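/- arXiv:2103.16467 — 4 statements merged into one kernel-verified Lean document; each statement's English description precedes it below -/
import Mathlib

section
/- Let B be a commutative group and f : ℤ → B. If Δ^{m+1} f ≡ 0 (where Δf(x) = f(x+1) - f(x)) and Δ^m f is not identically zero, then f equals the function of a binomial polynomial ∑_{δ=0}^{m} b_δ C(x,δ) with b_m ≠ 0; in particular the functional degree of f equals the degree of its unique binomial-polynomial representation. -/
/-!
Newton's forward-difference formula: if `Δⁿ f = 0` then `f x = ∑_{δ<n} C(x,δ) • Δ^δ f 0`.
Both sides have the same value at `0` and, by Pascal's rule `ΔC(·,δ+1) = C(·,δ)`, the same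
difference, so induction on `n` applied to `Δf` proves it. Taking `n = m + 1`, the top
coefficient `Δᵐ f 0` is nonzero because `Δᵐ f` has zero difference, hence is constant, and is
not identically zero.
-/

/-- The discrete difference operator: `(dOp g f) x = f (x + g) - f x`. -/
def dOp {A B : Type*} [AddCommGroup A] [AddCommGroup B] (g : A) (f : A → B) : A → B :=
  fun x => f (x + g) - f x

open Finset

def binomialPoly {B : Type*} [AddCommGroup B] (b : ℕ → B) (n : ℕ) (x : ℤ) : B :=
  ∑ δ ∈ range n, Ring.choose x δ • b δ

section

variable {B : Type*} [AddCommGroup B]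

@[simp]
theorem dOp_apply {A : Type*} [AddCommGroup A] (g : A) (f : A → B) (x : A) :
    dOp g f x = f (x + g) - f x :=
  rfl

theorem dOp_sub {A : Type*} [AddCommGroup A] (g : A) (f₁ f₂ : A → B) :
    dOp g (f₁ - f₂) = dOp g f₁ - dOp g f₂ := by
  ext x
  simp only [dOp_apply, Pi.sub_apply]
  abel

theorem eq_apply_zero_of_dOp_one_eq_zero {F : ℤ → B} (hF : dOp 1 F = 0) (x : ℤ) :
    F x = F 0 := by
  have step (y : ℤ) : F (y + 1) = F y := sub_eq_zero.mp (congrFun hF y)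
  induction x using Int.induction_on with
  | zero => rfl
  | succ i ih => rw [step, ih]
  | pred i ih => rw [← ih, ← step, sub_add_cancel]

theorem eq_of_dOp_one_eq {F G : ℤ → B} (h₀ : F 0 = G 0) (hd : dOp 1 F = dOp 1 G) : F = G := by
  have hconst := eq_apply_zero_of_dOp_one_eq_zero (F := F - G) (by rw [dOp_sub, hd, sub_self])
  ext x
  simpa [h₀, sub_eq_zero] using hconst x

theorem binomialPoly_apply_zero (b : ℕ → B) (n : ℕ) : binomialPoly b (n + 1) 0 = b 0 := by
  simp [binomialPoly, sum_range_succ', Ring.choose_zero_succ]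

theorem dOp_one_binomialPoly (b : ℕ → B) (n : ℕ) :
    dOp 1 (binomialPoly b (n + 1)) = binomialPoly (fun δ => b (δ + 1)) n := by
  ext x
  simp only [dOp_apply, binomialPoly, sum_range_succ' _ n, Ring.choose_succ_succ,
    Ring.choose_zero_right, add_smul, sum_add_distrib]
  abel

theorem eq_binomialPoly_of_iterate_dOp_eq_zero {n : ℕ} {f : ℤ → B}
    (h : (dOp 1)^[n] f = 0) : f = binomialPoly (fun δ => (dOp 1)^[δ] f 0) n := by
  induction n generalizing f with
  | zero =>
    subst h
    ext
    simp [binomialPoly]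
  | succ n ih =>
    refine eq_of_dOp_one_eq (binomialPoly_apply_zero (fun δ => (dOp 1)^[δ] f 0) n).symm ?_
    rw [dOp_one_binomialPoly]
    exact ih h

end

/-- A function `f : ℤ → B` of functional degree exactly `m` is given by a binomial
polynomial (polyfract) of degree exactly `m`: `f x = ∑_{δ=0}^{m} b_δ • C(x,δ)` with `b m ≠ 0`. -/
theorem fdeg_eq_polyfract_degree {B : Type*} [AddCommGroup B] (f : ℤ → B) (m : ℕ)
    (h : (dOp (1 : ℤ))^[m + 1] f = 0) (h' : (dOp (1 : ℤ))^[m] f ≠ 0) :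
    ∃ b : ℕ → B, b m ≠ 0 ∧
      ∀ x : ℤ, f x = ∑ δ ∈ Finset.range (m + 1), Ring.choose x δ • b δ := by
  refine ⟨fun δ => (dOp 1)^[δ] f 0, ?_, congrFun (eq_binomialPoly_of_iterate_dOp_eq_zero h)⟩
  intro htop
  have hconst := eq_apply_zero_of_dOp_one_eq_zero (F := (dOp 1)^[m] f)
    (by rwa [← Function.iterate_succ_apply' (dOp 1) m f])
  exact h' (funext fun x => (hconst x).trans htop)
end

section
/- Let p be a prime and α, β ≥ 1. For δ ∈ ℕ define ĉ_{δ,α} := ∑ (-1)^i C(δ, i), the sum over all i ∈ {0,…,δ} with i ≡ δ (mod p^α). If δ > β·p^α - (β-1)·p^{α-1} - 1, then p^β divides ĉ_{δ,α}. -/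
/-!
Let `u` generate the group ring `ℤ[ℤ/p^α]`, so that `ĉ_{δ,α}` is the coefficient of `u^δ` in
`(1 - u)^δ`, and put `π = u - 1`, `c = p^(α-1)`, `φ = p^α - c`. Modulo `p` the cyclotomic
polynomial `Φ_{p^α}` is `(X - 1)^φ` and `X^c - 1` is `(X - 1)^c`, so the factorisation
`X^(p^α) - 1 = Φ_{p^α} · (X^c - 1)` evaluated at `u` gives `(π^φ + p g)(π^c + p h) = 0`.
This relation forces `p^β ∣ π^(c + βφ)`, and `c + βφ = βp^α - (β-1)p^(α-1) ≤ δ`.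
-/

/-- `ĉ_{δ,α} = ∑ (-1)^i C(δ,i)`, summed over `i ∈ {0,…,δ}` with `i ≡ δ (mod p^α)`. -/
def cHat (p α δ : ℕ) : ℤ :=
  ∑ i ∈ Finset.range (δ + 1),
    if i % p ^ α = δ % p ^ α then (-1 : ℤ) ^ i * (δ.choose i : ℤ) else 0

open Polynomial

theorem dvd_pow_add_mul_of_mul_eq_zero {R : Type*} [CommRing R] {π z g h : R} {c φ : ℕ}
    (hcφ : c ≤ φ) (hrel : (π ^ φ + z * g) * (π ^ c + z * h) = 0) (n : ℕ) :
    z ^ n ∣ π ^ (c + n * φ) := by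
  set w := π ^ c + z * h
  -- `π ^ φ` acts on `w` as `-(z * g)`, since `(π ^ φ + z * g) * w = 0`.
  have hpow : ∀ m : ℕ, π ^ (m * φ) * w = (-(z * g)) ^ m * w := by
    intro m
    induction m with
    | zero => simp
    | succ m ih =>
      rw [add_mul, one_mul, pow_add, mul_right_comm, ih, pow_succ, mul_assoc, mul_assoc]
      congr 1
      linear_combination hrel
  induction n with
  | zero => simp
  | succ n ih =>
    have hsplit :
        π ^ (c + (n + 1) * φ) = (-(z * g)) ^ (n + 1) * w - z * (h * π ^ ((n + 1) * φ)) := by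
      rw [← hpow, pow_add]; ring
    have hn : z ^ n ∣ π ^ ((n + 1) * φ) := by
      have : (n + 1) * φ = (c + n * φ) + (φ - c) := by rw [add_mul, one_mul]; omega
      rw [this, pow_add]
      exact ih.mul_right _
    rw [hsplit]
    refine dvd_sub ?_ ?_
    · exact (pow_dvd_pow_of_dvd ((dvd_mul_right z g).neg_right) _).mul_right _
    · rw [pow_succ']
      exact mul_dvd_mul_left z (hn.mul_left h)

theorem Polynomial.natCast_dvd_sub_of_map_eq {p : ℕ} {f g : ℤ[X]}
    (h : f.map (Int.castRingHom (ZMod p)) = g.map (Int.castRingHom (ZMod p))) :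
    (p : ℤ[X]) ∣ f - g := by
  rw [← map_natCast C, C_dvd_iff_dvd_coeff]
  intro i
  rw [coeff_sub, ← ZMod.intCast_eq_intCast_iff_dvd_sub]
  simpa using (congrArg (coeff · i) h).symm

section

variable {p : ℕ} [Fact p.Prime]

theorem Polynomial.natCast_dvd_cyclotomic_prime_pow_sub (k : ℕ) :
    (p : ℤ[X]) ∣ cyclotomic (p ^ (k + 1)) ℤ - (X - 1) ^ (p ^ (k + 1) - p ^ k) := by
  apply natCast_dvd_sub_of_map_eq
  simpa using cyclotomic_mul_prime_pow_eq (ZMod p) (m := 1)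
    (by simp [(Fact.out : p.Prime).ne_one]) k.succ_pos

theorem Polynomial.natCast_dvd_X_pow_sub_one_sub (k : ℕ) :
    (p : ℤ[X]) ∣ X ^ p ^ k - 1 - (X - 1) ^ p ^ k := by
  apply natCast_dvd_sub_of_map_eq
  simp [sub_pow_char_pow]

theorem exists_mul_eq_zero_of_pow_prime_pow_eq_one {R : Type*} [CommRing R] {x : R} {k : ℕ}
    (hx : x ^ p ^ (k + 1) = 1) :
    ∃ g h : R, ((x - 1) ^ (p ^ (k + 1) - p ^ k) + p * g) * ((x - 1) ^ p ^ k + p * h) = 0 := by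
  obtain ⟨g, hg⟩ := natCast_dvd_cyclotomic_prime_pow_sub (p := p) k
  obtain ⟨h, hh⟩ := natCast_dvd_X_pow_sub_one_sub (p := p) k
  refine ⟨aeval x g, aeval x h, ?_⟩
  have := congrArg (aeval x) (cyclotomic_prime_pow_mul_X_pow_sub_one ℤ p k)
  rw [sub_eq_iff_eq_add'.mp hg, sub_eq_iff_eq_add'.mp hh] at this
  simpa [hx] using this

theorem natCast_pow_dvd_sub_one_pow_of_pow_prime_pow_eq_one {R : Type*} [CommRing R] {x : R}
    {k : ℕ} (hx : x ^ p ^ (k + 1) = 1) (n : ℕ) :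
    (p : R) ^ n ∣ (x - 1) ^ (p ^ k + n * (p ^ (k + 1) - p ^ k)) := by
  obtain ⟨g, h, hrel⟩ := exists_mul_eq_zero_of_pow_prime_pow_eq_one hx
  have hle : p ^ k ≤ p ^ (k + 1) - p ^ k := by
    have := Nat.mul_le_mul_left (p ^ k) (Fact.out : p.Prime).two_le
    rw [pow_succ]
    omega
  exact dvd_pow_add_mul_of_mul_eq_zero hle hrel n

end

open AddMonoidAlgebra in
theorem cHat_eq_coeff_one_sub_pow (p α δ : ℕ) :
    cHat p α δ = ((1 - single (1 : ZMod (p ^ α)) (1 : ℤ)) ^ δ).coeff δ := by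
  rw [sub_eq_neg_add, add_pow, AddMonoidAlgebra.coeff_sum, Finsupp.finsetSum_apply, cHat]
  refine Finset.sum_congr rfl fun i _ => ?_
  rw [one_pow, mul_one, ← single_neg, single_pow, natCast_def, single_mul_single, coeff_single,
    Finsupp.single_apply, nsmul_one, add_zero]
  simp only [ZMod.natCast_eq_natCast_iff']

theorem AddMonoidAlgebra.intCast_dvd_coeff {M : Type*} [AddMonoid M] {z : ℤ}
    {f : AddMonoidAlgebra ℤ M} (h : (z : AddMonoidAlgebra ℤ M) ∣ f) (m : M) : z ∣ f.coeff m := by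
  obtain ⟨r, rfl⟩ := h
  rw [← zsmul_eq_mul, coeff_smul_apply, smul_eq_mul]
  exact dvd_mul_right _ _

theorem cHat_div_of_large_degree_general (p : ℕ) (hp : p.Prime) (α β : ℕ) (hα : 1 ≤ α)
    (δ : ℕ)
    (hδ : (δ : ℤ) > (β : ℤ) * (p : ℤ) ^ α - ((β : ℤ) - 1) * (p : ℤ) ^ (α - 1) - 1) :
    (p : ℤ) ^ β ∣ cHat p α δ := by
  have : Fact p.Prime := ⟨hp⟩
  obtain ⟨k, rfl⟩ : ∃ k, α = k + 1 := ⟨α - 1, by omega⟩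
  set u := AddMonoidAlgebra.single (1 : ZMod (p ^ (k + 1))) (1 : ℤ)
  have hu : u ^ p ^ (k + 1) = 1 := by
    rw [AddMonoidAlgebra.single_pow, one_pow, nsmul_one, ZMod.natCast_self,
      ← AddMonoidAlgebra.one_def]
  have hdeg : p ^ k + β * (p ^ (k + 1) - p ^ k) ≤ δ := by
    have hcq : p ^ k ≤ p ^ (k + 1) := Nat.pow_le_pow_right hp.pos k.le_succ
    zify [hcq]
    simp only [add_tsub_cancel_right] at hδ
    linarith
  have hdvd : (p : AddMonoidAlgebra ℤ (ZMod (p ^ (k + 1)))) ^ β ∣ (1 - u) ^ δ := by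
    rw [← neg_sub, neg_pow]
    exact ((natCast_pow_dvd_sub_one_pow_of_pow_prime_pow_eq_one hu β).trans
      (pow_dvd_pow _ hdeg)).mul_left _
  rw [cHat_eq_coeff_one_sub_pow]
  exact AddMonoidAlgebra.intCast_dvd_coeff (by exact_mod_cast hdvd) _

theorem cHat_div_of_large_degree (p : ℕ) (hp : p.Prime) (α β : ℕ) (hα : 1 ≤ α) (hβ : 1 ≤ β)
    (δ : ℕ)
    (hδ : (δ : ℤ) > (β : ℤ) * (p : ℤ) ^ α - ((β : ℤ) - 1) * (p : ℤ) ^ (α - 1) - 1) :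
    (p : ℤ) ^ β ∣ cHat p α δ :=
  cHat_div_of_large_degree_general p hp α β hα δ hδ
end

section
/- Let p be a prime, α, β ≥ 1, and δ = (β(p-1)+1)·p^{α-1} - 1. Then in the polynomial ring (ℤ/p^βℤ)[X], the remainder of (X-1)^δ upon division by X^{p^α} - 1 equals (-p)^{β-1} · ∑_{j=0}^{p^α - 1} X^j. -/
/-! Put `y = X - 1`, `n = p ^ (α - 1)`, `q = p ^ α` and `N = ∑_{i<q} X ^ i`, so that
`y * N = X ^ q - 1`. Expanding `X ^ q = ((y + 1) ^ n) ^ p` binomially over `ℤ` gives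
`y ^ q ≡ y * N - p * y ^ n` modulo `p * y * (p, y ^ n)`; cancelling `y` in the domain `ℤ[X]`
yields `y ^ (q - 1) ≡ N - p * y ^ (n - 1)` modulo `p * (p, y ^ n)`.
Modulo `X ^ q - 1` we have `y * N = 0`, and this congruence says that multiplying `y ^ (q - 1)`
by `y ^ (q - n)` is multiplication by `-p`, up to an error in `p ^ (k + 1) * (p, y ^ n)` after
`k` steps. Since `δ = (q - 1) + (q - n) * (β - 1)` and `p ^ β = 0`, this gives
`y ^ δ = (-p) ^ (β - 1) * N`. -/

open Polynomial Finset

theorem exists_add_one_pow_prime_eq {R : Type*} [CommRing R] {p : ℕ} (hp : p.Prime) (z : R) :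
    ∃ h, (z + 1) ^ p = z ^ p + 1 + p * z + p * z ^ 2 * h := by
  obtain ⟨s, rfl⟩ : ∃ s, p = s + 2 := ⟨p - 2, by have := hp.two_le; omega⟩
  set c : ℕ → ℕ := fun i ↦ (s + 2).choose (i + 2) / (s + 2)
  have hc (i : ℕ) (hi : i ∈ range s) :
      z ^ (i + 1 + 1) * ((s + 2).choose (i + 1 + 1) : R) =
        (s + 2 : ℕ) * z ^ 2 * (z ^ i * c i) := by
    rw [← Nat.mul_div_cancel' (hp.dvd_choose_self (by omega) (by have := mem_range.1 hi; omega))]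
    push_cast
    ring
  refine ⟨∑ i ∈ range s, z ^ i * c i, ?_⟩
  rw [add_pow, sum_range_succ, sum_range_succ', sum_range_succ', mul_sum]
  simp only [one_pow, mul_one]
  rw [sum_congr rfl hc]
  simp only [Nat.cast_add, Nat.cast_ofNat, zero_add, pow_one, Nat.choose_one_right, pow_zero,
    Nat.choose_zero_right, Nat.cast_one, mul_one, Nat.choose_self]
  ring

theorem Polynomial.exists_X_sub_one_pow_prime_pow_sub_one_eq {p : ℕ} (hp : p.Prime) (a : ℕ) :
    ∃ j ∈ Ideal.span {(p : ℤ[X]), (X - 1) ^ p ^ a},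
      (X - 1 : ℤ[X]) ^ (p ^ (a + 1) - 1) =
        ∑ i ∈ range (p ^ (a + 1)), (X : ℤ[X]) ^ i - (p : ℤ[X]) * (X - 1) ^ (p ^ a - 1) +
          (p : ℤ[X]) * j := by
  set n := p ^ a
  set Y : ℤ[X] := X - 1
  have hY : Y ≠ 0 := by simpa [Y] using X_sub_C_ne_zero (1 : ℤ)
  have hn : n ≠ 0 := pow_ne_zero _ hp.ne_zero
  obtain ⟨r, hr⟩ := exists_add_pow_prime_pow_eq hp Y 1 a
  have hZ : (X : ℤ[X]) ^ n - 1 = Y ^ n + p * Y * r := by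
    simp only [Y, sub_add_cancel, one_pow, mul_one] at hr
    linear_combination hr
  obtain ⟨s, hs⟩ := dvd_sub_pow_of_dvd_sub (p := p) (a := (X : ℤ[X]) ^ n - 1) (b := Y ^ n)
    ⟨Y * r, by linear_combination hZ⟩ 1
  rw [pow_one] at hs
  -- the `p ^ 2`-term vanishes at `X = 1`, so it is divisible by `Y` as well
  obtain ⟨s, rfl⟩ : Y ∣ s := by
    have hs₁ : s.IsRoot 1 := by simpa [Y, hn, hp.ne_zero] using congrArg (eval 1) hs
    simpa [Y] using dvd_iff_isRoot.2 hs₁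
  obtain ⟨h, hh⟩ := exists_add_one_pow_prime_eq hp (X ^ n - 1 : ℤ[X])
  rw [sub_add_cancel, ← pow_mul, ← pow_succ] at hh
  set g := s + r + (2 * Y ^ n * r + p * Y * r ^ 2) * h
  have hexp : (X : ℤ[X]) ^ p ^ (a + 1) - 1 =
      (Y ^ n) ^ p + p * Y ^ n + p * (Y ^ n) ^ 2 * h + p ^ 2 * Y * g := by
    linear_combination hh + hs + p * (1 + (X ^ n - 1 + Y ^ n + p * Y * r) * h) * hZ
  have hgeom : (∑ i ∈ range (p ^ (a + 1)), X ^ i) * Y = X ^ p ^ (a + 1) - 1 := geom_sum_mul X _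
  have hq : Y * Y ^ (p ^ (a + 1) - 1) = (Y ^ n) ^ p := by
    rw [mul_pow_sub_one (pow_ne_zero _ hp.ne_zero), ← pow_mul, ← pow_succ]
  have hn' : Y * Y ^ (n - 1) = Y ^ n := mul_pow_sub_one hn Y
  refine ⟨-g * (p : ℤ[X]) + -(Y ^ (n - 1) * h) * Y ^ n, Ideal.mem_span_pair.2 ⟨_, _, rfl⟩,
    mul_left_cancel₀ hY ?_⟩
  linear_combination hq - hgeom - hexp + p * (1 + h * Y ^ n) * hn'

theorem exists_sub_one_pow_prime_pow_sub_one_eq {T : Type*} [CommRing T] {p : ℕ} (hp : p.Prime)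
    (a : ℕ) (x : T) :
    ∃ j ∈ Ideal.span {(p : T), (x - 1) ^ p ^ a},
      (x - 1) ^ (p ^ (a + 1) - 1) =
        ∑ i ∈ range (p ^ (a + 1)), x ^ i - p * (x - 1) ^ (p ^ a - 1) + p * j := by
  obtain ⟨j, hj, h⟩ := exists_X_sub_one_pow_prime_pow_sub_one_eq hp a
  refine ⟨aeval x j, ?_, by simpa using congrArg (aeval x) h⟩
  simpa [Ideal.map_span, Set.image_pair] using Ideal.mem_map_of_mem (aeval x) hj

section

variable {T : Type*} [CommRing T] {p y N : T} {n q : ℕ}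

theorem exists_mem_span_pow_sub_one_mul_pow_eq (hn : 0 < n) (hnq : 2 * n ≤ q) (hN : y * N = 0)
    (he : ∃ j ∈ Ideal.span {p, y ^ n}, y ^ (q - 1) = N - p * y ^ (n - 1) + p * j) (k : ℕ) :
    ∃ j ∈ Ideal.span {p, y ^ n},
      y ^ (q - 1) * (y ^ (q - n)) ^ k = (-p) ^ k * y ^ (q - 1) + p ^ (k + 1) * j := by
  obtain ⟨t, rfl⟩ : ∃ t, n = t + 1 := ⟨n - 1, by omega⟩
  obtain ⟨s, rfl⟩ : ∃ s, q = t + 1 + (t + 1 + s) := ⟨q - 2 * (t + 1), by omega⟩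
  simp only [show t + 1 + (t + 1 + s) - 1 = t + (t + 1 + s) by omega, Nat.add_sub_cancel,
    Nat.add_sub_cancel_left] at he ⊢
  set J := Ideal.span {p, y ^ (t + 1)}
  obtain ⟨j₀, hj₀, he⟩ := he
  have hq : y ^ (t + 1 + (t + 1 + s)) = p * (y * j₀ - y ^ (t + 1)) := by
    linear_combination y * he + hN
  have hmul (j : T) (hj : j ∈ J) : ∃ j' ∈ J, j * y ^ (t + 1 + s) = p * j' := by
    obtain ⟨c, d, rfl⟩ := Ideal.mem_span_pair.1 hj
    have hyJ : y ^ (t + 1) ∈ J := Ideal.subset_span (by simp)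
    refine ⟨c * y ^ s * y ^ (t + 1) + d * (y * j₀ - y ^ (t + 1)), ?_,
      by linear_combination d * hq⟩
    exact add_mem (Ideal.mul_mem_left _ _ hyJ)
      (Ideal.mul_mem_left _ _ (sub_mem (Ideal.mul_mem_left _ _ hj₀) hyJ))
  have hstep : y ^ (t + (t + 1 + s)) * y ^ (t + 1 + s) =
      -p * y ^ (t + (t + 1 + s)) + p * (j₀ * y ^ (t + 1 + s)) := by
    linear_combination y ^ (t + s) * hq
  induction k with
  | zero => exact ⟨0, zero_mem _, by ring⟩
  | succ k ih =>
    obtain ⟨j, hj, hk⟩ := ih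
    obtain ⟨j₁, hj₁, h₁⟩ := hmul j₀ hj₀
    obtain ⟨j₂, hj₂, h₂⟩ := hmul j hj
    refine ⟨(-1) ^ k * j₁ + j₂, add_mem (Ideal.mul_mem_left _ _ hj₁) hj₂, ?_⟩
    rw [neg_pow] at hk ⊢
    linear_combination y ^ (t + 1 + s) * hk + (-1) ^ k * p ^ k * hstep +
      (-1) ^ k * p ^ (k + 1) * h₁ + p ^ (k + 1) * h₂

theorem pow_sub_one_mul_pow_eq_of_pow_eq_zero (hn : 0 < n) (hnq : 2 * n ≤ q) (hN : y * N = 0)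
    (he : ∃ j ∈ Ideal.span {p, y ^ n}, y ^ (q - 1) = N - p * y ^ (n - 1) + p * j) {k : ℕ}
    (hp : p ^ (k + 1) = 0) : y ^ (q - 1) * (y ^ (q - n)) ^ k = (-p) ^ k * N := by
  obtain ⟨j, -, hj⟩ := exists_mem_span_pow_sub_one_mul_pow_eq hn hnq hN he k
  obtain ⟨j₀, -, he⟩ := he
  rw [hj, he, neg_pow]
  linear_combination (j + (-1) ^ k * (j₀ - y ^ (n - 1))) * hp

end

theorem Polynomial.degree_C_mul_geom_sum_lt {R : Type*} [Semiring R] (c : R) (n : ℕ) :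
    (C c * ∑ i ∈ range n, X ^ i).degree < (n : WithBot ℕ) := by
  refine (degree_lt_iff_coeff_zero _ _).2 fun m hm => ?_
  simp only [coeff_C_mul, finsetSum_coeff, coeff_X_pow, sum_ite_eq, mem_range, mul_ite, mul_one,
    mul_zero, ite_eq_right_iff]
  omega

theorem Nat.mul_pow_sub_one_eq_pow_succ_sub_one_add_mul {p : ℕ} (hp : 0 < p) (a k : ℕ) :
    ((k + 1) * (p - 1) + 1) * p ^ a - 1 = (p ^ (a + 1) - 1) + (p ^ (a + 1) - p ^ a) * k := by
  obtain ⟨m, rfl⟩ : ∃ m, p = m + 1 := ⟨p - 1, by omega⟩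
  have hpos : 0 < (m + 1) ^ a := pow_pos hp a
  have h₁ : ((k + 1) * m + 1) * (m + 1) ^ a =
      (m * (m + 1) ^ a + (m + 1) ^ a) + m * (m + 1) ^ a * k := by ring
  have h₂ : (m + 1) ^ (a + 1) = m * (m + 1) ^ a + (m + 1) ^ a := by ring
  rw [Nat.add_sub_cancel, h₁, h₂, Nat.add_sub_cancel]
  omega

theorem Polynomial.modByMonic_X_pow_sub_one_eq_of_dvd_sub {R : Type*} [CommRing R] [Nontrivial R]
    {n : ℕ} (hn : 0 < n) {f g : R[X]} (hg : g.degree < n) (h : X ^ n - 1 ∣ f - g) :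
    f %ₘ (X ^ n - 1) = g := by
  have hmonic : (X ^ n - 1 : R[X]).Monic := by simpa using monic_X_pow_sub_C (1 : R) hn.ne'
  rw [modByMonic_eq_of_dvd_sub hmonic h, (modByMonic_eq_self_iff hmonic).2]
  rwa [← C_1, degree_X_pow_sub_C hn]

theorem pow_sub_one_modByMonic (p : ℕ) (hp : p.Prime) (α β : ℕ) (hα : 1 ≤ α) (hβ : 1 ≤ β) :
    ((X - 1 : (ZMod (p ^ β))[X]) ^ ((β * (p - 1) + 1) * p ^ (α - 1) - 1)) %ₘ
        (X ^ (p ^ α) - 1) =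
      C ((-(p : ZMod (p ^ β))) ^ (β - 1)) * ∑ j ∈ Finset.range (p ^ α), X ^ j := by
  obtain ⟨a, rfl⟩ : ∃ a, α = a + 1 := ⟨α - 1, by omega⟩
  obtain ⟨k, rfl⟩ : ∃ k, β = k + 1 := ⟨β - 1, by omega⟩
  have : Fact (1 < p ^ (k + 1)) := ⟨Nat.one_lt_pow (by omega) hp.one_lt⟩
  refine modByMonic_X_pow_sub_one_eq_of_dvd_sub (pow_pos hp.pos _)
    (degree_C_mul_geom_sum_lt _ _) ?_
  set f : (ZMod (p ^ (k + 1)))[X] := X ^ p ^ (a + 1) - 1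
  rw [← AdjoinRoot.mk_eq_zero, map_sub, sub_eq_zero]
  set x := AdjoinRoot.mk f X
  have hN : (x - 1) * ∑ i ∈ range (p ^ (a + 1)), x ^ i = 0 := by
    rw [mul_comm, geom_sum_mul, ← map_pow, ← map_one (AdjoinRoot.mk f), ← map_sub,
      AdjoinRoot.mk_self]
  have hp0 : (p : AdjoinRoot f) ^ (k + 1) = 0 := by
    rw [← Nat.cast_pow, ← map_natCast (algebraMap (ZMod (p ^ (k + 1))) _), ZMod.natCast_self,
      map_zero]
  have hnq : 2 * p ^ a ≤ p ^ (a + 1) := Nat.pow_succ' ▸ Nat.mul_le_mul_right _ hp.two_le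
  simp only [map_pow, map_sub, map_one, map_mul, map_sum, map_neg, map_natCast,
    Nat.add_sub_cancel]
  rw [Nat.mul_pow_sub_one_eq_pow_succ_sub_one_add_mul hp.pos, pow_add _ (p ^ (a + 1) - 1), pow_mul]
  exact pow_sub_one_mul_pow_eq_of_pow_eq_zero (pow_pos hp.pos a) hnq hN
    (exists_sub_one_pow_prime_pow_sub_one_eq hp a x) hp0
end

section
/- Let p₁ ≠ p₂ be primes, A a nontrivial finite abelian p₁-group and B a nontrivial finite abelian p₂-group. Then any nonconstant function f : A → B has infinite functional degree. -/
/-- `f` has functional degree at most `m` (w.r.t. the generating set `A` itself):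
all `(m+1)`-fold derivatives vanish. -/
def DegLE {A B : Type*} [AddCommGroup A] [AddCommGroup B] (f : A → B) (m : ℕ) : Prop :=
  ∀ gs : List A, gs.length = m + 1 → gs.foldr (fun g h => dOp g h) f = 0

/-!
Fix `g : A` and let `S` be translation by `g`, so that `Δ_g = S - 1` and `S ^ |A| = 1`. Since `|A|`
is prime to `p₂`, some `q = p₂ ^ s ≥ m + 1` is `≡ 1 [MOD |A|]`; then `S ^ q = S`, and the Frobenius
congruence `(S - 1) ^ q ≡ S ^ q - 1 (mod p₂)` reads `Δ_g ^ q ≡ Δ_g (mod p₂)`. As `Δ_g ^ q f = 0`,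
`Δ_g f` lies in `p₂ • (A → B)`, so it is killed by a smaller power of `p₂` than `f`. By induction on
that power `Δ_g f` is `S`-invariant, whence `|A| • Δ_g f = (S ^ |A| - 1) f = 0`, and coprimality
gives `Δ_g f = 0`. So `f` is invariant under all translations, i.e. constant.
-/

open Polynomial

theorem Polynomial.natCast_dvd_X_sub_one_pow_sub {p : ℕ} (hp : p.Prime) (s : ℕ) :
    (p : ℤ[X]) ∣ (X - 1) ^ p ^ s - (X ^ p ^ s - 1) := by
  have := Fact.mk hp
  have hker : (X - 1 : ℤ[X]) ^ p ^ s - (X ^ p ^ s - 1) ∈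
      RingHom.ker (mapRingHom (Int.castRingHom (ZMod p))) := by
    simp [RingHom.mem_ker, sub_pow_char_pow]
  rwa [ker_mapRingHom, ZMod.ker_intCastRingHom, Ideal.map_span, Set.image_singleton,
    Ideal.mem_span_singleton, eq_intCast, Int.cast_natCast] at hker

theorem Nat.exists_pow_ge_and_modEq_one {p N : ℕ} (hp : 1 < p) (hpN : p.Coprime N) (n : ℕ) :
    ∃ s, n ≤ p ^ s ∧ p ^ s ≡ 1 [MOD N] := by
  have hN : 0 < N := Nat.pos_of_ne_zero (by rintro rfl; simp at hpN; omega)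
  refine ⟨N.totient * n, ?_, ?_⟩
  · calc n ≤ N.totient * n := Nat.le_mul_of_pos_left n (Nat.totient_pos.2 hN)
      _ ≤ p ^ (N.totient * n) := (Nat.lt_pow_self hp).le
  · simpa [pow_mul] using (Nat.ModEq.pow_totient hpN).pow n

theorem Module.End.apply_eq_self_of_sub_one_pow_apply_eq_zero {M : Type*} [AddCommGroup M]
    {S : Module.End ℤ M} {p N : ℕ} (hp : p.Prime) (hpN : p.Coprime N) (hS : S ^ N = 1)
    {m e : ℕ} {v : M} (hv : p ^ e • v = 0) (hSv : ((S - 1) ^ (m + 1)) v = 0) : S v = v := by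
  obtain ⟨s, hms, hs⟩ := Nat.exists_pow_ge_and_modEq_one hp.one_lt hpN (m + 1)
  obtain ⟨h, hh⟩ := natCast_dvd_X_sub_one_pow_sub hp s
  set E := aeval S h
  have hfrob : (S - 1) ^ p ^ s = S - 1 + p * E := by
    rw [add_comm]
    simpa [pow_eq_pow_of_modEq hs hS] using congrArg (aeval S) (sub_eq_iff_eq_add.mp hh)
  have hsub_one_apply : ∀ w, ((S - 1) ^ (m + 1)) w = 0 → (S - 1) w = -(p • E w) := by
    intro w hw
    have : ((S - 1) ^ p ^ s) w = 0 := by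
      rw [← Nat.sub_add_cancel hms, pow_add, Module.End.mul_apply, hw, map_zero]
    rw [hfrob] at this
    simpa [eq_neg_iff_add_eq_zero] using this
  induction e generalizing v with
  | zero => simp_all
  | succ e ih =>
    have hpe : p ^ e • (S - 1) v = 0 := by
      rw [hsub_one_apply v hSv, smul_neg, smul_smul, ← pow_succ, ← map_nsmul, hv, map_zero,
        neg_zero]
    have hSw : ((S - 1) ^ (m + 1)) ((S - 1) v) = 0 := by
      rw [← Module.End.mul_apply, ← (Commute.self_pow (S - 1) (m + 1)).eq,
        Module.End.mul_apply, hSv, map_zero]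
    have hw_fixed : S ((S - 1) v) = (S - 1) v := ih hpe hSw
    have hNw : N • (S - 1) v = 0 := by
      have hgeom := congrArg (· v) (geom_sum_mul S N)
      simp only [hS, sub_self, Module.End.mul_apply, LinearMap.sum_apply,
        LinearMap.zero_apply, Module.End.pow_apply, Function.iterate_fixed hw_fixed] at hgeom
      simpa [smul_sub] using hgeom
    have hw0 : (S - 1) v = 0 := by
      rw [← AddMonoid.addOrderOf_eq_one_iff]
      exact Nat.eq_one_of_dvd_coprimes (hpN.pow_left e)
        (addOrderOf_dvd_of_nsmul_eq_zero hpe) (addOrderOf_dvd_of_nsmul_eq_zero hNw)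
    simpa [sub_eq_zero] using hw0

section Shift

variable {A : Type*} [AddCommGroup A]

def shiftEnd (B : Type*) [AddCommGroup B] (g : A) : Module.End ℤ (A → B) :=
  LinearMap.funLeft ℤ B (· + g)

variable {B : Type*} [AddCommGroup B]

theorem shiftEnd_pow_apply (g : A) (n : ℕ) (f : A → B) (x : A) :
    (shiftEnd B g ^ n) f x = f (x + n • g) := by
  induction n generalizing f x with
  | zero => simp
  | succ n ih => rw [pow_succ, Module.End.mul_apply, ih, shiftEnd, LinearMap.funLeft_apply,
      succ_nsmul, add_assoc]

theorem shiftEnd_pow_card (g : A) : shiftEnd B g ^ Nat.card A = 1 := by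
  ext f x
  simp [shiftEnd_pow_apply]

theorem foldr_replicate_dOp (g : A) (f : A → B) (n : ℕ) :
    (List.replicate n g).foldr (fun g h => dOp g h) f = ((shiftEnd B g - 1) ^ n) f := by
  induction n with
  | zero => simp
  | succ n ih => rw [List.replicate_succ, List.foldr_cons, ih, pow_succ']; rfl

end Shift

theorem nonconstant_infinite_degree_general {A B : Type*} [AddCommGroup A] [AddCommGroup B]
    (p₁ p₂ : ℕ) (hp₁ : p₁.Prime) (hp₂ : p₂.Prime) (hne : p₁ ≠ p₂)
    (hA : ∃ k : ℕ, Nat.card A = p₁ ^ k) (hB : ∃ k : ℕ, Nat.card B = p₂ ^ k)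
    (f : A → B) (hf : ∃ a a' : A, f a ≠ f a') :
    ∀ m : ℕ, ¬ DegLE f m := by
  intro m hdeg
  obtain ⟨kA, hkA⟩ := hA
  obtain ⟨kB, hkB⟩ := hB
  obtain ⟨a, a', hfa⟩ := hf
  have hcop : p₂.Coprime (Nat.card A) :=
    hkA ▸ ((Nat.coprime_primes hp₂ hp₁).2 hne.symm).pow_right kA
  have hf_ann : p₂ ^ kB • f = 0 := funext fun _ => hkB ▸ card_nsmul_eq_zero'
  have hinv : ∀ g x, f (x + g) = f x := fun g =>
    congrFun <| Module.End.apply_eq_self_of_sub_one_pow_apply_eq_zero hp₂ hcop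
      (shiftEnd_pow_card g) hf_ann
      (by rw [← foldr_replicate_dOp]; exact hdeg _ List.length_replicate)
  exact hfa (by rw [← zero_add a, ← zero_add a', hinv, hinv])

/-- A nonconstant function from a nontrivial finite abelian `p₁`-group to a nontrivial
finite abelian `p₂`-group (`p₁ ≠ p₂` primes) has infinite functional degree. -/
theorem nonconstant_infinite_degree {A B : Type*} [AddCommGroup A] [AddCommGroup B]
    [Finite A] [Finite B] (p₁ p₂ : ℕ) (hp₁ : p₁.Prime) (hp₂ : p₂.Prime) (hne : p₁ ≠ p₂)
    (hA : ∃ k : ℕ, Nat.card A = p₁ ^ k) (hB : ∃ k : ℕ, Nat.card B = p₂ ^ k)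
    (hA1 : 1 < Nat.card A) (hB1 : 1 < Nat.card B)
    (f : A → B) (hf : ∃ a a' : A, f a ≠ f a') :
    ∀ m : ℕ, ¬ DegLE f m :=
  nonconstant_infinite_degree_general p₁ p₂ hp₁ hp₂ hne hA hB f hf
end
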